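/- Let λ be a symplectic partition of 2n and ν = λ + s(λ). Then λ ≤ ν in the dominance order, and for every special symplectic partition μ of 2n with λ ≤ μ one has ν ≤ μ. In other words, ν = sp(λ) is the smallest special symplectic partition dominating λ. -/

import Mathlib

/-!
In a symplectic partition every odd part fills a run `[p, q]` of even length, so
`λ_1 + ⋯ + λ_k` is even whenever `λ_{k+1} < λ_k`. Hence `s(λ)` is `+1` at `p` and `-1` at `q` for
the runs of odd parts with `p` even, and vanishes elsewhere: the partial sums of `ν - λ` are `1`
for `p ≤ k < q` and `0` otherwise, which gives `λ ≤ ν`. At such a `k` with `k` even,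
`λ_1 + ⋯ + λ_k` is odd while the partial sums of a special `μ` at even indices are even, so
`λ < μ` there; for `k` odd, strict dominance at the even neighbours `k ± 1` passes to `k` by
concavity of the partial sums of `μ`, since those of `λ` are affine on `[k - 1, k + 1]`.
-/

open Classical

noncomputable section

/-- A partition: weakly decreasing on indices `j ≥ 1` (parts are `l 1 ≥ l 2 ≥ ...`). -/
def IsPartition (l : ℕ → ℕ) : Prop := ∀ j, 1 ≤ j → l (j + 1) ≤ l j

/-- The parts vanish eventually (finitely many nonzero parts). -/
def EventuallyZero (l : ℕ → ℕ) : Prop := ∃ N, ∀ j, N ≤ j → l j = 0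

/-- Multiplicity of `i` as a part of `l`. -/
def mult (l : ℕ → ℕ) (i : ℕ) : ℕ := Nat.card {j : ℕ | 1 ≤ j ∧ l j = i}

/-- The sum of the parts of `l`. -/
def psum (l : ℕ → ℕ) : ℕ := ∑ᶠ j : ℕ, l (j + 1)

/-- Symplectic: every odd part occurs with even multiplicity. -/
def IsSymplectic (l : ℕ → ℕ) : Prop := ∀ i, Odd i → Even (mult l i)

/-- Orthogonal: every even positive part occurs with even multiplicity. -/
def IsOrthogonal (l : ℕ → ℕ) : Prop := ∀ i, 0 < i → Even i → Even (mult l i)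

/-- Special: `l (2j-1)` and `l (2j)` have the same parity for all `j ≥ 1`. -/
def IsSpecial (l : ℕ → ℕ) : Prop := ∀ j, 1 ≤ j → l (2 * j - 1) % 2 = l (2 * j) % 2

/-- `P^+(λ)`: odd `j` with `λ_j` even and `λ_{j-1} > λ_j` (convention `λ_0 = ∞`). -/
def Pplus (l : ℕ → ℕ) : Set ℕ := {j | Odd j ∧ Even (l j) ∧ (j = 1 ∨ l (j - 1) > l j)}

/-- `P^-(λ)`: even `j ≥ 2` with `λ_j` even and `λ_j > λ_{j+1}`. -/
def Pminus (l : ℕ → ℕ) : Set ℕ := {j | 2 ≤ j ∧ Even j ∧ Even (l j) ∧ l j > l (j + 1)}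

/-- `Q^+(λ)`: even `j ≥ 2` with `λ_j` odd and `λ_{j-1} > λ_j`. -/
def Qplus (l : ℕ → ℕ) : Set ℕ := {j | 2 ≤ j ∧ Even j ∧ Odd (l j) ∧ l (j - 1) > l j}

/-- `Q^-(λ)`: odd `j ≥ 1` with `λ_j` odd and `λ_j > λ_{j+1}`. -/
def Qminus (l : ℕ → ℕ) : Set ℕ := {j | Odd j ∧ Odd (l j) ∧ l j > l (j + 1)}

/-- Orthogonal version of `P^+`: odd `j` with `λ_j` odd and `λ_{j-1} > λ_j` (`λ_0 = ∞`). -/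
def PplusO (l : ℕ → ℕ) : Set ℕ := {j | Odd j ∧ Odd (l j) ∧ (j = 1 ∨ l (j - 1) > l j)}

/-- Orthogonal version of `P^-`: even `j ≥ 2` with `λ_j` odd and `λ_j > λ_{j+1}`. -/
def PminusO (l : ℕ → ℕ) : Set ℕ := {j | 2 ≤ j ∧ Even j ∧ Odd (l j) ∧ l j > l (j + 1)}

/-- The sequence `s(λ)`: `1` on `Q^+`, `-1` on `Q^-`, `0` elsewhere. -/
def sSeq (l : ℕ → ℕ) (j : ℕ) : ℤ :=
  if j ∈ Qplus l then 1 else if j ∈ Qminus l then -1 else 0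

/-- The sequence `ζ(λ)`: `1` on `P^+`, `-1` on `P^-`, `0` elsewhere. -/
def zSeq (l : ℕ → ℕ) (j : ℕ) : ℤ :=
  if j ∈ Pplus l then 1 else if j ∈ Pminus l then -1 else 0

/-- Orthogonal `ζ(λ)`: `1` on `PplusO`, `-1` on `PminusO`, `0` elsewhere. -/
def zSeqO (l : ℕ → ℕ) (j : ℕ) : ℤ :=
  if j ∈ PplusO l then 1 else if j ∈ PminusO l then -1 else 0

/-- `sp(λ) = λ + s(λ)` (termwise, truncated to ℕ). -/
def spPart (l : ℕ → ℕ) (j : ℕ) : ℕ := ((l j : ℤ) + sSeq l j).toNat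

/-- Dominance order on partitions. -/
def Dom (l m : ℕ → ℕ) : Prop :=
  ∀ k, ∑ j ∈ Finset.range k, l (j + 1) ≤ ∑ j ∈ Finset.range k, m (j + 1)

/-- `j_min(i)`: smallest index `j ≥ 1` with `l j = i`. -/
def jminPart (l : ℕ → ℕ) (i : ℕ) : ℕ := sInf {j | 1 ≤ j ∧ l j = i}

/-- `j_max(i)`: largest index `j ≥ 1` with `l j = i`. -/
def jmaxPart (l : ℕ → ℕ) (i : ℕ) : ℕ := sSup {j | 1 ≤ j ∧ l j = i}

/-- `iSeq 1 > iSeq 2 > ... > iSeq t` enumerates the even positive parts of odd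
multiplicity of the symplectic partition `l`, completed by a final `0` if their
number is odd (so that `t` is even). -/
def MarkedSeq (l : ℕ → ℕ) (iSeq : ℕ → ℕ) (t : ℕ) : Prop :=
  Even t ∧
  (∀ h h', 1 ≤ h → h < h' → h' ≤ t → iSeq h' < iSeq h) ∧
  (∀ h, 1 ≤ h → h ≤ t → Even (iSeq h)) ∧
  (∀ h, 1 ≤ h → h ≤ t → iSeq h ≠ 0 → Odd (mult l (iSeq h))) ∧
  (∀ i, 0 < i → Even i → Odd (mult l i) → ∃ h, 1 ≤ h ∧ h ≤ t ∧ iSeq h = i)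

/-- Orthogonal analogue: `iSeq` enumerates the odd parts of odd multiplicity. -/
def MarkedSeqO (l : ℕ → ℕ) (iSeq : ℕ → ℕ) (t : ℕ) : Prop :=
  Even t ∧
  (∀ h h', 1 ≤ h → h < h' → h' ≤ t → iSeq h' < iSeq h) ∧
  (∀ h, 1 ≤ h → h ≤ t → Odd (iSeq h)) ∧
  (∀ h, 1 ≤ h → h ≤ t → Odd (mult l (iSeq h))) ∧
  (∀ i, Odd i → Odd (mult l i) → ∃ h, 1 ≤ h ∧ h ≤ t ∧ iSeq h = i)

/-- `i` lies in the range `[i_{2h}, i_{2h-1}]` for some `h`. -/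
def InRange (iSeq : ℕ → ℕ) (t : ℕ) (i : ℕ) : Prop :=
  ∃ h, 1 ≤ h ∧ 2 * h ≤ t ∧ iSeq (2 * h) ≤ i ∧ i ≤ iSeq (2 * h - 1)

/-- Intervals of a (special symplectic) partition `l`, relative to the marked
sequence `iSeq` of length `t`. -/
def IsItv (l : ℕ → ℕ) (iSeq : ℕ → ℕ) (t : ℕ) (Δ : Set ℕ) : Prop :=
  (∃ h, 1 ≤ h ∧ 2 * h ≤ t ∧
      Δ = {i | (i = 0 ∨ 0 < mult l i) ∧ iSeq (2 * h) ≤ i ∧ i ≤ iSeq (2 * h - 1)}) ∨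
  (∃ i, Even i ∧ (i = 0 ∨ 0 < mult l i) ∧ ¬ InRange iSeq t i ∧ Δ = {i})

/-- Intervals of a (special orthogonal, even) partition `l`. -/
def IsItvO (l : ℕ → ℕ) (iSeq : ℕ → ℕ) (t : ℕ) (Δ : Set ℕ) : Prop :=
  (∃ h, 1 ≤ h ∧ 2 * h ≤ t ∧
      Δ = {i | 0 < mult l i ∧ iSeq (2 * h) ≤ i ∧ i ≤ iSeq (2 * h - 1)}) ∨
  (∃ i, Odd i ∧ 0 < mult l i ∧ ¬ InRange iSeq t i ∧ Δ = {i})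

/-- `J(Δ)`: the set of indices `j ≥ 1` whose part lies in `Δ`. -/
def idxSet (l : ℕ → ℕ) (Δ : Set ℕ) : Set ℕ := {j | 1 ≤ j ∧ l j ∈ Δ}

/-- Good parity at index `j`: `λ_{1,j}` even and `λ_{2,j}` odd. -/
def GoodIdx (l₁ l₂ : ℕ → ℕ) (j : ℕ) : Prop := Even (l₁ j) ∧ Odd (l₂ j)

/-- `J^+`: odd `j` of good parity with a strict decrease at `j-1 → j` for some `d`. -/
def Jplus (l₁ l₂ : ℕ → ℕ) : Set ℕ :=
  {j | Odd j ∧ GoodIdx l₁ l₂ j ∧ (j = 1 ∨ l₁ (j - 1) > l₁ j ∨ l₂ (j - 1) > l₂ j)}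

/-- `J^-`: even `j` of good parity with a strict decrease at `j → j+1` for some `d`. -/
def Jminus (l₁ l₂ : ℕ → ℕ) : Set ℕ :=
  {j | 2 ≤ j ∧ Even j ∧ GoodIdx l₁ l₂ j ∧ (l₁ j > l₁ (j + 1) ∨ l₂ j > l₂ (j + 1))}

/-- The sequence `ξ`: `1` on `J^+`, `-1` on `J^-`, `0` elsewhere. -/
def xiSeq (l₁ l₂ : ℕ → ℕ) (j : ℕ) : ℤ :=
  if j ∈ Jplus l₁ l₂ then 1 else if j ∈ Jminus l₁ l₂ then -1 else 0

/-- The endoscopic induction `λ = λ₁ + λ₂ + ξ` (termwise, truncated to ℕ). -/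
def indPart (l₁ l₂ : ℕ → ℕ) (j : ℕ) : ℕ := ((l₁ j : ℤ) + (l₂ j : ℤ) + xiSeq l₁ l₂ j).toNat


open Finset

def prefixSum (l : ℕ → ℕ) (k : ℕ) : ℕ := ∑ j ∈ range k, l (j + 1)

lemma dom_iff {l m : ℕ → ℕ} : Dom l m ↔ ∀ k, prefixSum l k ≤ prefixSum m k := Iff.rfl

lemma prefixSum_zero (l : ℕ → ℕ) : prefixSum l 0 = 0 := rfl

lemma prefixSum_succ (l : ℕ → ℕ) (k : ℕ) : prefixSum l (k + 1) = prefixSum l k + l (k + 1) :=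
  sum_range_succ _ _

lemma prefixSum_eq_sum_Ico (l : ℕ → ℕ) (k : ℕ) :
    prefixSum l k = ∑ j ∈ Ico 1 (k + 1), l j := by
  rw [prefixSum, range_eq_Ico, sum_Ico_add' l 0 k 1, zero_add]

lemma mult_eq_card_filter {l : ℕ → ℕ} {k v : ℕ} (h : ∀ j, k < j → l j ≠ v) :
    mult l v = #{j ∈ Ico 1 (k + 1) | l j = v} := by
  have hset : {j : ℕ | 1 ≤ j ∧ l j = v} = ↑{j ∈ Ico 1 (k + 1) | l j = v} := by
    ext j
    simp only [Set.mem_ofPred_eq, coe_filter, mem_Ico]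
    constructor
    · rintro ⟨hj, rfl⟩
      exact ⟨⟨hj, Nat.lt_succ_of_le (not_lt.mp fun hkj => h j hkj rfl)⟩, rfl⟩
    · rintro ⟨⟨hj, -⟩, hv⟩
      exact ⟨hj, hv⟩
  rw [mult, hset, Nat.card_coe_set_eq, Set.ncard_coe_finset]

/-- Each odd value among the first `k` parts contributes its full, even, multiplicity. -/
lemma even_prefixSum_of_separated {l : ℕ → ℕ} (hsymp : IsSymplectic l) {k : ℕ}
    (hsep : ∀ i j, 1 ≤ i → i ≤ k → k < j → l j ≠ l i) : Even (prefixSum l k) := by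
  rw [prefixSum_eq_sum_Ico, show ∑ j ∈ Ico 1 (k + 1), l j = ∑ j ∈ Ico 1 (k + 1), id (l j) from rfl,
    sum_comp]
  refine even_sum _ fun v hv => ?_
  obtain ⟨i, hi, rfl⟩ := mem_image.mp hv
  obtain ⟨hi1, hik⟩ := mem_Ico.mp hi
  rw [smul_eq_mul, id]
  rcases Nat.even_or_odd (l i) with he | ho
  · exact he.mul_left _
  · rw [← mult_eq_card_filter fun j hj => hsep i j hi1 (by omega) hj]
    exact (hsymp _ ho).mul_right _

lemma IsPartition.antitoneOn {l : ℕ → ℕ} (hpart : IsPartition l) : AntitoneOn l (Set.Ici 1) :=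
  antitoneOn_nat_Ici_of_succ_le hpart

lemma even_prefixSum_of_lt {l : ℕ → ℕ} (hpart : IsPartition l) (hsymp : IsSymplectic l)
    {k : ℕ} (hk : l (k + 1) < l k) : Even (prefixSum l k) := by
  refine even_prefixSum_of_separated hsymp fun i j hi hik hkj =>
    (lt_of_le_of_lt (b := l (k + 1)) ?_ ?_).ne
  · exact hpart.antitoneOn (show 1 ≤ k + 1 by omega) (show 1 ≤ j by omega) hkj
  · exact lt_of_lt_of_le hk (hpart.antitoneOn hi (show 1 ≤ k by omega) hik)

/-- The condition says that `p ≤ k < q` for a run `[p, q]` of an odd part with `p` even: inside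
the run, `λ_1 + ⋯ + λ_k ≡ k - p + 1 (mod 2)`. -/
lemma sum_sSeq_eq_ite {l : ℕ → ℕ} (hpart : IsPartition l) (hsymp : IsSymplectic l) (k : ℕ) :
    ∑ j ∈ range k, sSeq l (j + 1) =
      if Odd (l k) ∧ l (k + 1) = l k ∧ Odd (prefixSum l k + k) then 1 else 0 := by
  induction k with
  | zero => simp [prefixSum_zero]
  | succ k ih =>
    have hstart : k = 0 ∨ l (k + 1) < l k → Even (prefixSum l k) := by
      rintro (rfl | h)
      · exact ⟨0, rfl⟩
      · exact even_prefixSum_of_lt hpart hsymp h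
    have hend : l (k + 1 + 1) < l (k + 1) → Even (prefixSum l k + l (k + 1)) := by
      rw [← prefixSum_succ]
      exact even_prefixSum_of_lt hpart hsymp
    have hmono : 1 ≤ k → l (k + 1) ≤ l k := hpart k
    have hmono' : l (k + 1 + 1) ≤ l (k + 1) := hpart (k + 1) (by omega)
    rw [sum_range_succ, ih, prefixSum_succ]
    simp only [sSeq, Qplus, Qminus, Set.mem_ofPred_eq, Nat.even_iff, Nat.odd_iff,
      Nat.add_sub_cancel] at hstart hend ⊢
    split_ifs <;> omega

lemma spPart_cast (l : ℕ → ℕ) (j : ℕ) : (spPart l j : ℤ) = l j + sSeq l j := by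
  refine Int.toNat_of_nonneg ?_
  have hpos : j ∈ Qminus l → 0 < l j := fun hj => hj.2.1.pos
  unfold sSeq
  split_ifs with hplus hminus <;> grind

lemma prefixSum_spPart (l : ℕ → ℕ) (k : ℕ) :
    (prefixSum (spPart l) k : ℤ) = prefixSum l k + ∑ j ∈ range k, sSeq l (j + 1) := by
  simp only [prefixSum, Nat.cast_sum, spPart_cast, sum_add_distrib]

lemma IsSpecial.even_prefixSum {μ : ℕ → ℕ} (hμ : IsSpecial μ) {k : ℕ} (hk : Even k) :
    Even (prefixSum μ k) := by
  obtain ⟨m, rfl⟩ := hk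
  induction m with
  | zero => exact ⟨0, rfl⟩
  | succ m ih =>
    have hpair := hμ (m + 1) (by omega)
    rw [show 2 * (m + 1) - 1 = m + m + 1 by omega, show 2 * (m + 1) = m + m + 1 + 1 by omega]
      at hpair
    rw [show m + 1 + (m + 1) = m + m + 1 + 1 by omega, prefixSum_succ, prefixSum_succ]
    rw [Nat.even_iff] at ih ⊢
    omega

lemma prefixSum_lt_of_odd {l μ : ℕ → ℕ} (hμ : IsSpecial μ) (hdom : Dom l μ) {k : ℕ}
    (hk : Even k) (hodd : Odd (prefixSum l k)) : prefixSum l k < prefixSum μ k :=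
  (dom_iff.1 hdom k).lt_of_ne fun h => Nat.not_even_iff_odd.mpr hodd (h ▸ hμ.even_prefixSum hk)

lemma prefixSum_lt_of_odd_run {l μ : ℕ → ℕ} (hμ : IsPartition μ) (hsp : IsSpecial μ)
    (hdom : Dom l μ) {k : ℕ} (hk : Odd (l k)) (hrun : l (k + 1) = l k)
    (hodd : Odd (prefixSum l k + k)) : prefixSum l k < prefixSum μ k := by
  rcases Nat.even_or_odd k with he | ⟨m, rfl⟩
  · exact prefixSum_lt_of_odd hsp hdom he (by simpa [Nat.odd_add, he] using hodd)
  · have hM := prefixSum_succ μ (2 * m + 1)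
    have hM' := prefixSum_succ μ (2 * m)
    have hL := prefixSum_succ l (2 * m)
    have hL' := prefixSum_succ l (2 * m + 1)
    rw [Nat.odd_iff] at hk hodd
    have hprev := prefixSum_lt_of_odd hsp hdom (k := 2 * m) (by simp) (Nat.odd_iff.mpr (by omega))
    have hnext := prefixSum_lt_of_odd hsp hdom (k := 2 * m + 1 + 1) ⟨m + 1, by ring⟩
      (Nat.odd_iff.mpr (by omega))
    have hconcave := hμ (2 * m + 1) (by omega)
    omega

theorem lambda_add_s_is_sp_general (n : ℕ) (l : ℕ → ℕ) (hpart : IsPartition l)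
    (hsymp : IsSymplectic l) :
    Dom l (spPart l) ∧
    ∀ μ : ℕ → ℕ, IsPartition μ → EventuallyZero μ → psum μ = 2 * n →
      IsSymplectic μ → IsSpecial μ → Dom l μ → Dom (spPart l) μ := by
  have hν (k : ℕ) : (prefixSum (spPart l) k : ℤ) = prefixSum l k +
      if Odd (l k) ∧ l (k + 1) = l k ∧ Odd (prefixSum l k + k) then 1 else 0 := by
    rw [prefixSum_spPart, sum_sSeq_eq_ite hpart hsymp]
  refine ⟨dom_iff.2 fun k => ?_, fun μ hμ _ _ _ hμsp hdom => dom_iff.2 fun k => ?_⟩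
  · have := hν k
    split_ifs at this <;> omega
  · have := hν k
    split_ifs at this with hrun
    · have := prefixSum_lt_of_odd_run hμ hμsp hdom hrun.1 hrun.2.1 hrun.2.2
      omega
    · have := dom_iff.1 hdom k
      omega

/-- `ν = λ + s(λ)` is the smallest special symplectic partition
dominating `λ`. -/
theorem lambda_add_s_is_sp (n : ℕ) (l : ℕ → ℕ) (hpart : IsPartition l)
    (hzero : EventuallyZero l) (hsum : psum l = 2 * n) (hsymp : IsSymplectic l) :
    Dom l (spPart l) ∧
    ∀ μ : ℕ → ℕ, IsPartition μ → EventuallyZero μ → psum μ = 2 * n →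
      IsSymplectic μ → IsSpecial μ → Dom l μ → Dom (spPart l) μ :=
  lambda_add_s_is_sp_general n l hpart hsymp
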